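/- arXiv:2303.05690 — 3 statements merged into one kernel-verified Lean document; each statement's English description precedes it below -/
import Mathlib

section
/- For every real number t and every real number s with |s| ≥ e^(1/4^(1/3)), the inequality s·t ≤ t²·(e^(t²) − 1) + |s|·(log|s|)^(1/2) holds. -/
/-!
For `|t| ≤ √(log |s|)` the claim is immediate. Beyond that point `exp (t ^ 2) ≥ |s|`, so it
suffices that the quadratic `(|s| - 1) x ^ 2 - |s| x + |s| √(log |s|)` is nonnegative, i.e. that
its discriminant `|s| ^ 2 - 4 (|s| - 1) |s| √(log |s|)` is nonpositive; this holds as soon as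
`log |s| ≥ 3 / 5`, and `4 ^ (-1/3) ≥ 3 / 5`.
-/

open Real

lemma mul_le_mul_sq_add_of_sq_le {a b c : ℝ} (ha : 0 < a) (h : b ^ 2 ≤ 4 * a * c) (x : ℝ) :
    b * x ≤ a * x ^ 2 + c := by
  nlinarith [sq_nonneg (2 * a * x - b)]

lemma three_fifths_le_four_rpow_neg_one_third : (3 / 5 : ℝ) ≤ 4 ^ (-(1 / 3 : ℝ)) := by
  set c : ℝ := 4 ^ (-(1 / 3 : ℝ))
  have hc : c ^ 3 = 1 / 4 := by
    rw [← rpow_natCast, ← rpow_mul (by norm_num)]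
    norm_num
  nlinarith [sq_nonneg (c - 3 / 5), sq_nonneg (c + 3 / 5)]

lemma le_four_mul_sub_one_mul_sqrt_log {A : ℝ} (hA : 0 < A) (h : 3 / 5 ≤ log A) :
    A ≤ 4 * (A - 1) * √(log A) := by
  have hL : 3 / 4 ≤ √(log A) := le_sqrt_of_sq_le (by linarith)
  have hA' : 8 / 5 ≤ A := by
    have := add_one_le_exp (log A)
    rw [exp_log hA] at this
    linarith
  nlinarith

lemma mul_abs_le_sq_mul_exp_sub_one_add {A : ℝ} (hA0 : 0 < A)
    (hA : A ≤ 4 * (A - 1) * √(log A)) (t : ℝ) :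
    A * |t| ≤ t ^ 2 * (exp (t ^ 2) - 1) + A * √(log A) := by
  have hexp : 0 ≤ t ^ 2 * (exp (t ^ 2) - 1) :=
    mul_nonneg (sq_nonneg t) (sub_nonneg.mpr (one_le_exp (sq_nonneg t)))
  rcases le_or_gt |t| √(log A) with ht | ht
  · nlinarith
  · have hlog : log A < t ^ 2 := by
      rw [← sq_abs]; exact (sqrt_lt' ((sqrt_nonneg _).trans_lt ht)).mp ht
    have hAexp : A ≤ exp (t ^ 2) := (log_le_iff_le_exp hA0).mp hlog.le
    have ha : 0 < A - 1 := by nlinarith [sqrt_nonneg (log A)]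
    calc A * |t| ≤ (A - 1) * |t| ^ 2 + A * √(log A) :=
          mul_le_mul_sq_add_of_sq_le ha (by nlinarith) _
      _ ≤ t ^ 2 * (exp (t ^ 2) - 1) + A * √(log A) := by
          rw [sq_abs]; nlinarith [sq_nonneg t]

/-- Souza–do Ó inequality: for all `t` and `|s| ≥ exp(4^(-1/3))`,
`s·t ≤ t²(e^{t²} − 1) + |s|·√(log|s|)`. -/
theorem stmt_0 (t s : ℝ) (hs : |s| ≥ Real.exp ((4:ℝ) ^ (-(1/3 : ℝ)))) :
    s * t ≤ t ^ 2 * (Real.exp (t ^ 2) - 1) + |s| * Real.sqrt (Real.log |s|) := by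
  have hs0 : 0 < |s| := (exp_pos _).trans_le hs
  have hlog : 3 / 5 ≤ log |s| :=
    three_fifths_le_four_rpow_neg_one_third.trans ((le_log_iff_exp_le hs0).mpr hs)
  calc s * t ≤ |s| * |t| := by rw [← abs_mul]; exact le_abs_self _
    _ ≤ _ := mul_abs_le_sq_mul_exp_sub_one_add hs0
          (le_four_mul_sub_one_mul_sqrt_log hs0 hlog) t
end

section
/- Let 1 < p < ∞ and β ≥ 1. For all nonnegative reals a, b, m, setting a_m = min{a,m} and b_m = min{b,m}, one has |a−b|^(p−2)·(a−b)·(a_m^β − b_m^β) ≥ (β p^p / (β+p−1)^p) · (a_m^((β+p−1)/p) − b_m^((β+p−1)/p))^p. -/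
/-!
Write `A = min a m`, `B = min b m`, `γ = (β + p - 1) / p`, `r = (β - 1) / p`, and let `b ≤ a`,
so that `0 ≤ B ≤ A` and `A - B ≤ a - b`. Then `A ^ γ - B ^ γ = γ ∫_B^A t ^ r` and
`A ^ β - B ^ β = β ∫_B^A (t ^ r) ^ p`, so Hölder's inequality against the constant `1`,
`(∫_B^A f) ^ p ≤ (A - B) ^ (p - 1) ∫_B^A f ^ p`, gives the claim with `A - B` in place of `a - b`.
For `a ≤ b` the right-hand side is bounded by the same expression with `|A ^ γ - B ^ γ| ^ p`,
which is symmetric in `a` and `b`.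
-/

open MeasureTheory

theorem integral_rpow_le_measureReal_univ_mul {α : Type*} [MeasurableSpace α] {μ : Measure α}
    [IsFiniteMeasure μ] {p : ℝ} (hp : 1 < p) {f : α → ℝ} (hf_nonneg : 0 ≤ᵐ[μ] f)
    (hf : MemLp f (ENNReal.ofReal p) μ) :
    (∫ x, f x ∂μ) ^ p ≤ μ.real Set.univ ^ (p - 1) * ∫ x, f x ^ p ∂μ := by
  have hpq : p.HolderConjugate (p / (p - 1)) := .conjExponent hp
  have holder := integral_mul_le_Lp_mul_Lq_of_nonneg hpq hf_nonneg
    (.of_forall fun _ => zero_le_one) hf (memLp_const 1)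
  simp only [mul_one, Real.one_rpow, integral_const, smul_eq_mul] at holder
  have hp0 : 0 < p := by linarith
  calc (∫ x, f x ∂μ) ^ p
      ≤ ((∫ x, f x ^ p ∂μ) ^ (1 / p) * μ.real Set.univ ^ (1 / (p / (p - 1)))) ^ p := by
        gcongr
        exact integral_nonneg_of_ae hf_nonneg
    _ = μ.real Set.univ ^ (p - 1) * ∫ x, f x ^ p ∂μ := by
        have hI : 0 ≤ ∫ x, f x ^ p ∂μ := integral_nonneg_of_ae (by
          filter_upwards [hf_nonneg] with x hx using Real.rpow_nonneg hx p)
        rw [Real.mul_rpow (by positivity) (by positivity), ← Real.rpow_mul hI,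
          ← Real.rpow_mul measureReal_nonneg, one_div_mul_cancel hp0.ne', Real.rpow_one,
          mul_comm]
        congr 2
        field_simp

theorem rpow_sub_rpow_rpow_le {p β A B : ℝ} (hp : 1 < p) (hβ : 1 ≤ β) (hB : 0 ≤ B)
    (hBA : B ≤ A) :
    β * p ^ p / (β + p - 1) ^ p * (A ^ ((β + p - 1) / p) - B ^ ((β + p - 1) / p)) ^ p ≤
      (A - B) ^ (p - 1) * (A ^ β - B ^ β) := by
  have hp0 : 0 < p := by linarith
  set γ := (β + p - 1) / p with hγ
  set r := (β - 1) / p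
  have hr0 : 0 ≤ r := div_nonneg (by linarith) hp0.le
  have hγ0 : 0 < γ := div_pos (by linarith) hp0
  have hγr : γ = r + 1 := by simp only [γ, r]; field_simp; ring
  have hrp : r * p = β - 1 := div_mul_cancel₀ _ hp0.ne'
  set μ := volume.restrict (Set.Ioc B A)
  have hnonneg : ∀ᵐ t ∂μ, B ≤ t := by
    filter_upwards [ae_restrict_mem measurableSet_Ioc] with t ht using ht.1.le
  have hmem : MemLp (fun t : ℝ => t ^ r) (ENNReal.ofReal p) μ := by
    refine .of_bound (Real.continuous_rpow_const hr0).aestronglyMeasurable (A ^ r) ?_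
    filter_upwards [ae_restrict_mem measurableSet_Ioc] with t ht
    rw [Real.norm_of_nonneg (Real.rpow_nonneg (hB.trans ht.1.le) r)]
    exact Real.rpow_le_rpow (hB.trans ht.1.le) ht.2 hr0
  have jensen := integral_rpow_le_measureReal_univ_mul hp
    (by filter_upwards [hnonneg] with t ht using Real.rpow_nonneg (hB.trans ht) r) hmem
  have hvol : μ.real Set.univ = A - B := by
    simp [μ, hBA]
  have hint_γ : ∫ t, t ^ r ∂μ = (A ^ γ - B ^ γ) / γ := by
    rw [← intervalIntegral.integral_of_le hBA, integral_rpow (.inl (by linarith)), hγr]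
  have hint_β : ∫ t, (t ^ r) ^ p ∂μ = (A ^ β - B ^ β) / β := by
    rw [setIntegral_congr_fun measurableSet_Ioc (g := fun t : ℝ => t ^ (β - 1))
      (fun t ht => by rw [← Real.rpow_mul (hB.trans ht.1.le), hrp]),
      ← intervalIntegral.integral_of_le hBA, integral_rpow (.inl (by linarith))]
    norm_num
  rw [hvol, hint_γ, hint_β] at jensen
  have hdiff : 0 ≤ A ^ γ - B ^ γ := sub_nonneg.2 (Real.rpow_le_rpow hB hBA hγ0.le)
  have hconst : β * p ^ p / (β + p - 1) ^ p * (A ^ γ - B ^ γ) ^ p =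
      β * ((A ^ γ - B ^ γ) / γ) ^ p := by
    rw [Real.div_rpow hdiff hγ0.le, hγ, Real.div_rpow (by linarith) hp0.le]
    field_simp
  calc β * p ^ p / (β + p - 1) ^ p * (A ^ γ - B ^ γ) ^ p
      = β * ((A ^ γ - B ^ γ) / γ) ^ p := hconst
    _ ≤ β * ((A - B) ^ (p - 1) * ((A ^ β - B ^ β) / β)) := by gcongr
    _ = (A - B) ^ (p - 1) * (A ^ β - B ^ β) := by field_simp

theorem abs_rpow_sub_two_mul_self {p t : ℝ} (hp : p ≠ 1) (ht : 0 ≤ t) :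
    |t| ^ (p - 2) * t = t ^ (p - 1) := by
  rw [abs_of_nonneg ht, ← Real.rpow_add_one' ht (by contrapose! hp; linarith)]
  ring_nf

theorem mul_abs_rpow_sub_rpow_le_of_le {p β a b m : ℝ} (hp : 1 < p) (hβ : 1 ≤ β)
    (hb : 0 ≤ b) (hm : 0 ≤ m) (hba : b ≤ a) :
    β * p ^ p / (β + p - 1) ^ p *
        |min a m ^ ((β + p - 1) / p) - min b m ^ ((β + p - 1) / p)| ^ p ≤
      |a - b| ^ (p - 2) * (a - b) * (min a m ^ β - min b m ^ β) := by
  have hB : 0 ≤ min b m := le_min hb hm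
  have hBA : min b m ≤ min a m := min_le_min_right m hba
  have htrunc : min a m - min b m ≤ a - b := by
    have h := abs_min_sub_min_le_max a m b m
    rw [sub_self, abs_zero, max_eq_left (abs_nonneg _), abs_of_nonneg (sub_nonneg.2 hba)] at h
    exact (le_abs_self _).trans h
  have hγ0 : 0 ≤ (β + p - 1) / p := div_nonneg (by linarith) (by linarith)
  rw [abs_of_nonneg (sub_nonneg.2 (Real.rpow_le_rpow hB hBA hγ0)),
    abs_rpow_sub_two_mul_self hp.ne' (sub_nonneg.2 hba)]
  calc _ ≤ (min a m - min b m) ^ (p - 1) * (min a m ^ β - min b m ^ β) :=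
        rpow_sub_rpow_rpow_le hp hβ hB hBA
    _ ≤ (a - b) ^ (p - 1) * (min a m ^ β - min b m ^ β) := by
        gcongr
        exact sub_nonneg.2 (Real.rpow_le_rpow hB hBA (by linarith))

/-- Brasco–Lindgren–Parini, Lemma C.1. -/
theorem stmt_1 (p β : ℝ) (hp : 1 < p) (hβ : 1 ≤ β)
    (a b m : ℝ) (ha : 0 ≤ a) (hb : 0 ≤ b) (hm : 0 ≤ m) :
    |a - b| ^ (p - 2) * (a - b) * (min a m ^ β - min b m ^ β) ≥
      (β * p ^ p / (β + p - 1) ^ p) *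
        (min a m ^ ((β + p - 1) / p) - min b m ^ ((β + p - 1) / p)) ^ p := by
  have hconst : 0 ≤ β * p ^ p / (β + p - 1) ^ p := by
    have := Real.rpow_nonneg (by linarith : (0 : ℝ) ≤ p) p
    have := Real.rpow_nonneg (by linarith : (0 : ℝ) ≤ β + p - 1) p
    positivity
  refine (mul_le_mul_of_nonneg_left
    ((le_abs_self _).trans (Real.abs_rpow_le_abs_rpow _ _)) hconst).trans ?_
  rcases le_total b a with hba | hab
  · exact mul_abs_rpow_sub_rpow_le_of_le hp hβ hb hm hba
  · have h := mul_abs_rpow_sub_rpow_le_of_le hp hβ ha hm hab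
    rw [abs_sub_comm, abs_sub_comm b a] at h
    linear_combination h
end

section
/- Fix r₁ > 0 and for n ≥ 2 define the Moser function ω_n : ℝ → ℝ by ω_n(x) = (log n)^(1/2) if |x| ≤ r₁/n, ω_n(x) = log(r₁/|x|)/(log n)^(1/2) if r₁/n ≤ |x| ≤ r₁, and ω_n(x) = 0 if |x| ≥ r₁. Then ‖ω_n‖²_{L²(ℝ)} = O(1/log n) as n → ∞; more precisely ‖ω_n‖²_{L²} = 4r₁/log n + o(1/log n). -/
/-!
On `[0, r₁/n]` the square `ω_n²` is the constant `log n`; on `[r₁/n, r₁]` it is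
`log (r₁/t)² / log n`, and `t ((log (r/t))² + 2 log (r/t) + 2)` is an antiderivative of
`(log (r/t))²`. This gives the closed form `∫ ω_n² = 4 (r₁ - r₁/n) / log n - 4 r₁/n`, so the
error against `4 r₁ / log n` is `O(1/n)`, which is `o(1/log n)` because `log n = o(n)`.
-/

open Filter Asymptotics MeasureTheory Set Real

theorem hasDerivAt_log_div {r t : ℝ} (hr : r ≠ 0) (ht : t ≠ 0) :
    HasDerivAt (fun s => log (r / s)) (-t⁻¹) t := by
  refine (((hasDerivAt_const t r).div (hasDerivAt_id t) ht).log (div_ne_zero hr ht)).congr_deriv ?_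
  simp only [Pi.div_apply, id_eq]
  field_simp
  ring

theorem intervalIntegrable_log_div_sq {a b r : ℝ} (hr : r ≠ 0) (ha : 0 < a) (hb : 0 < b) :
    IntervalIntegrable (fun t => log (r / t) ^ 2) volume a b := by
  have hpos : ∀ t ∈ uIcc a b, 0 < t := fun t ht => lt_min ha hb |>.trans_le ht.1
  exact ContinuousOn.intervalIntegrable fun t ht =>
    ((hasDerivAt_log_div hr (hpos t ht).ne').continuousAt.pow 2).continuousWithinAt

theorem integral_log_div_sq {a r : ℝ} (ha : 0 < a) (har : a ≤ r) :
    ∫ t in a..r, log (r / t) ^ 2 =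
      2 * r - a * (log (r / a) ^ 2 + 2 * log (r / a) + 2) := by
  have hr := ha.trans_le har
  have hderiv : ∀ t ∈ uIcc a r, HasDerivAt
      (fun s => s * (log (r / s) ^ 2 + 2 * log (r / s) + 2)) (log (r / t) ^ 2) t := by
    intro t ht
    have ht0 : t ≠ 0 := (ha.trans_le (uIcc_of_le har ▸ ht).1).ne'
    have hlog := hasDerivAt_log_div hr.ne' ht0
    refine ((hasDerivAt_id t).mul
      (((hlog.pow 2).add (hlog.const_mul 2)).add_const 2)).congr_deriv ?_
    simp only [Pi.add_apply, Pi.pow_apply, id_eq]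
    field_simp
    ring
  rw [intervalIntegral.integral_eq_sub_of_hasDerivAt hderiv
    (intervalIntegrable_log_div_sq hr.ne' ha hr), div_self hr.ne', log_one]
  ring

noncomputable def moserRadial (a r t : ℝ) : ℝ :=
  if t ≤ a then √(log (r / a)) else if t ≤ r then log (r / t) / √(log (r / a)) else 0

section moserRadial

variable {a r t : ℝ}

theorem moserRadial_sq_of_le (hL : 0 ≤ log (r / a)) (ht : t ≤ a) :
    moserRadial a r t ^ 2 = log (r / a) := by
  rw [moserRadial, if_pos ht, sq_sqrt hL]

theorem moserRadial_sq_of_mem_Icc (hL : 0 ≤ log (r / a)) (ht : t ∈ Icc a r) :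
    moserRadial a r t ^ 2 = log (r / t) ^ 2 / log (r / a) := by
  rcases ht.1.eq_or_lt with rfl | hat
  · rw [moserRadial_sq_of_le hL le_rfl, sq, mul_self_div_self]
  · rw [moserRadial, if_neg hat.not_ge, if_pos ht.2, div_pow, sq_sqrt hL]

theorem moserRadial_of_lt (har : a ≤ r) (ht : r < t) : moserRadial a r t = 0 := by
  rw [moserRadial, if_neg (har.trans_lt ht).not_ge, if_neg ht.not_ge]

theorem integral_Ioi_moserRadial_sq (ha : 0 < a) (har : a < r) :
    ∫ t in Ioi 0, moserRadial a r t ^ 2 = 2 * (r - a) / log (r / a) - 2 * a := by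
  set L := log (r / a) with hL_def
  have hL : 0 < L := log_pos ((one_lt_div ha).mpr har)
  have h_left : EqOn (fun t => moserRadial a r t ^ 2) (fun _ => L) (uIcc 0 a) := fun t ht =>
    moserRadial_sq_of_le hL.le (uIcc_of_le ha.le ▸ ht).2
  have h_right : EqOn (fun t => moserRadial a r t ^ 2) (fun t => log (r / t) ^ 2 / L)
      (uIcc a r) := fun t ht => moserRadial_sq_of_mem_Icc hL.le (uIcc_of_le har.le ▸ ht)
  have h_int_left : IntervalIntegrable (fun t => moserRadial a r t ^ 2) volume 0 a :=
    (intervalIntegrable_congr (h_left.mono uIoc_subset_uIcc)).mpr intervalIntegrable_const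
  have h_int_right : IntervalIntegrable (fun t => moserRadial a r t ^ 2) volume a r :=
    (intervalIntegrable_congr (h_right.mono uIoc_subset_uIcc)).mpr
      ((intervalIntegrable_log_div_sq (ha.trans har).ne' ha (ha.trans har)).div_const L)
  calc ∫ t in Ioi 0, moserRadial a r t ^ 2
      = ∫ t in (0)..r, moserRadial a r t ^ 2 := by
        rw [intervalIntegral.integral_of_le (ha.trans har).le]
        refine setIntegral_eq_of_subset_of_forall_sdiff_eq_zero measurableSet_Ioi
          Ioc_subset_Ioi_self fun t ht => ?_
        rw [moserRadial_of_lt har.le (not_le.mp fun h => ht.2 ⟨ht.1, h⟩), zero_pow two_ne_zero]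
    _ = (∫ t in (0)..a, moserRadial a r t ^ 2) + ∫ t in a..r, moserRadial a r t ^ 2 :=
        (intervalIntegral.integral_add_adjacent_intervals h_int_left h_int_right).symm
    _ = a * L + (2 * r - a * (L ^ 2 + 2 * L + 2)) / L := by
        rw [intervalIntegral.integral_congr h_left, intervalIntegral.integral_congr h_right,
          intervalIntegral.integral_const, intervalIntegral.integral_div,
          integral_log_div_sq ha har.le]
        simp [← hL_def]
    _ = 2 * (r - a) / L - 2 * a := by
        field_simp
        ring

end moserRadial

theorem integral_moserRadial_abs_sq {a r : ℝ} (ha : 0 < a) (har : a < r) :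
    ∫ x, moserRadial a r |x| ^ 2 = 4 * (r - a) / log (r / a) - 4 * a := by
  rw [integral_comp_abs (f := fun t => moserRadial a r t ^ 2), integral_Ioi_moserRadial_sq ha har]
  ring

theorem isLittleO_one_div_natCast_one_div_log :
    (fun n : ℕ => 1 / (n : ℝ)) =o[atTop] fun n => 1 / log n := by
  simp only [one_div]
  refine (isLittleO_log_id_atTop.comp_tendsto tendsto_natCast_atTop_atTop).inv_rev ?_
  filter_upwards [eventually_ge_atTop 2] with n hn hlog
  exact absurd hlog (log_pos (by exact_mod_cast hn)).ne'

/-- L²-asymptotics of the Moser sequence: `‖ω_n‖²_{L²} = 4r₁/log n + o(1/log n)`. -/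
theorem stmt_9 (r₁ : ℝ) (hr : 0 < r₁)
    (ω : ℕ → ℝ → ℝ)
    (hω : ∀ n : ℕ, 2 ≤ n → ∀ x : ℝ,
      ω n x = if |x| ≤ r₁ / n then Real.sqrt (Real.log n)
        else if |x| ≤ r₁ then Real.log (r₁ / |x|) / Real.sqrt (Real.log n)
        else 0) :
    (fun n : ℕ => (∫ x : ℝ, (ω n x) ^ 2) - 4 * r₁ / Real.log n)
      =o[atTop] fun n : ℕ => 1 / Real.log n := by
  have h_exact : (fun n : ℕ => -(4 * r₁) * (1 / n * (1 / log n)) - 4 * r₁ * (1 / n))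
      =ᶠ[atTop] fun n => (∫ x, ω n x ^ 2) - 4 * r₁ / log n := by
    filter_upwards [eventually_ge_atTop 2] with n hn
    have hn1 : (1 : ℝ) < n := by exact_mod_cast hn
    have hlog : log (r₁ / (r₁ / n)) = log n := by rw [div_div_cancel₀ hr.ne']
    have hω_eq : ∀ x, ω n x = moserRadial (r₁ / n) r₁ |x| := fun x => by
      rw [hω n hn x, moserRadial, hlog]
    simp_rw [hω_eq]
    rw [integral_moserRadial_abs_sq (by positivity) (div_lt_self hr hn1), hlog]
    field_simp
    ring
  have h_inv_n : (fun n : ℕ => 1 / (n : ℝ)) =o[atTop] fun _ => (1 : ℝ) :=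
    (isLittleO_one_iff ℝ).mpr tendsto_one_div_atTop_nhds_zero_nat
  have h_prod : (fun n : ℕ => 1 / (n : ℝ) * (1 / log n)) =o[atTop] fun n => 1 / log n := by
    simpa only [one_mul] using h_inv_n.mul_isBigO (isBigO_refl (fun n : ℕ => 1 / log n) atTop)
  exact ((h_prod.const_mul_left _).sub
    (isLittleO_one_div_natCast_one_div_log.const_mul_left _)).congr' h_exact EventuallyEq.rfl
end
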